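/- Let f ≥ 1 be an integer and let χ be a Dirichlet character modulo f. Then for every s ∈ ℂ with Re s > 1, the Dirichlet L-function satisfies L(s, χ) = (1/Γ(s)) · ∫_0^1 (−log z)^{s−1} · (Σ_{a=1}^{f} χ(a) z^a) · ((1 − z^f) · z)^{−1} dz. -/

import Mathlib

/-!
For `|z| < 1` the periodicity of `χ` gives `F_χ(z) = ∑_{n ≥ 1} χ(n) zⁿ`. The substitution
`z = e^{-t}` turns the integral into the Mellin transform of `∑_{n ≥ 1} χ(n) e^{-nt}`, and since
`∑ |χ(n)| n^{-Re s}` converges for `Re s > 1`, it may be computed termwise: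
`∫₀^∞ t^{s-1} e^{-nt} dt = Γ(s) n^{-s}`.
-/

open MeasureTheory Set Real Complex

theorem hasSum_mul_pow_of_periodic {𝕜 : Type*} [NormedField 𝕜] [CompleteSpace 𝕜]
    {c : ℕ → 𝕜} {f : ℕ} (hf : 0 < f) (hc : Function.Periodic c f) {w : 𝕜} (hw : ‖w‖ < 1) :
    HasSum (fun n ↦ c n * w ^ n) ((∑ n ∈ Finset.range f, c n * w ^ n) / (1 - w ^ f)) := by
  have hc_le (n : ℕ) : ‖c n‖ ≤ ∑ i ∈ Finset.range f, ‖c i‖ :=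
    hc.map_mod_nat n ▸
      Finset.single_le_sum (fun i _ ↦ norm_nonneg (c i)) (Finset.mem_range.2 (n.mod_lt hf))
  have hsum : Summable (fun n ↦ c n * w ^ n) := by
    refine Summable.of_norm_bounded
      ((summable_geometric_of_lt_one (norm_nonneg w) hw).mul_left (∑ i ∈ Finset.range f, ‖c i‖))
      fun n ↦ ?_
    rw [norm_mul, norm_pow]
    gcongr
    exact hc_le n
  have hwf : 1 - w ^ f ≠ 0 := by
    refine sub_ne_zero.2 fun h ↦ ?_
    have : ‖w‖ ^ f < 1 := pow_lt_one₀ (norm_nonneg w) hw hf.ne'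
    rw [← norm_pow, ← h, norm_one] at this
    exact lt_irrefl 1 this
  have hshift : ∑' n, c (n + f) * w ^ (n + f) = w ^ f * ∑' n, c n * w ^ n := by
    rw [← tsum_mul_left]
    exact tsum_congr fun n ↦ by rw [hc n, pow_add]; ring
  have hsplit := hsum.sum_add_tsum_nat_add f
  rw [hshift] at hsplit
  convert hsum.hasSum using 1
  rw [div_eq_iff hwf]
  linear_combination hsplit

namespace DirichletCharacter

variable {f : ℕ} [NeZero f] (χ : DirichletCharacter ℂ f)

noncomputable def genFun (z : ℂ) : ℂ :=
  (∑ a ∈ Finset.Icc 1 f, χ a * z ^ a) / (1 - z ^ f)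

theorem hasSum_genFun {z : ℂ} (hz : ‖z‖ < 1) :
    HasSum (fun n : ℕ ↦ χ ↑(n + 1) * z ^ (n + 1)) (χ.genFun z) := by
  have hperiodic : Function.Periodic (fun n : ℕ ↦ χ ↑(n + 1)) f := fun n ↦ by
    simp only [Nat.cast_add, ZMod.natCast_self, add_zero]
  have hvalue : z * ((∑ n ∈ Finset.range f, χ ↑(n + 1) * z ^ n) / (1 - z ^ f)) = χ.genFun z := by
    rw [genFun, ← Finset.Ico_add_one_right_eq_Icc, Finset.sum_Ico_eq_sum_range, mul_div_assoc',
      Finset.mul_sum]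
    congr 1
    exact Finset.sum_congr rfl fun n _ ↦ by rw [add_comm 1 n, pow_succ]; ring
  rw [← hvalue]
  exact ((hasSum_mul_pow_of_periodic (NeZero.pos f) hperiodic hz).mul_left z).congr_fun
    fun n ↦ by ring

theorem hasSum_LFunction {s : ℂ} (hs : 1 < s.re) :
    HasSum (fun n : ℕ ↦ χ ↑(n + 1) / ((n + 1 : ℕ) : ℂ) ^ s) (LFunction χ s) := by
  have h := (LSeriesSummable_of_one_lt_re χ hs).LSeriesHasSum
  rw [LSeriesHasSum, ← hasSum_nat_add_iff' 1] at h
  simpa [LFunction_eq_LSeries χ hs, LSeries.term_of_ne_zero] using h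

theorem mellin_genFun_exp_neg {s : ℂ} (hs : 1 < s.re) :
    mellin (fun t : ℝ ↦ χ.genFun (rexp (-t))) s = Gamma s * LFunction χ s := by
  have hM := hasSum_mellin (a := fun n : ℕ ↦ χ ↑(n + 1)) (p := fun n ↦ n + 1)
    (F := fun t ↦ χ.genFun (rexp (-t)))
    (fun n ↦ Or.inr (by positivity)) (by linarith) (fun t ht ↦ ?_) ?_
  · refine hM.unique (((χ.hasSum_LFunction hs).mul_left (Gamma s)).congr_fun fun n ↦ ?_)
    push_cast
    ring
  · have hz : ‖(rexp (-t) : ℂ)‖ < 1 := by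
      rw [norm_real, Real.norm_of_nonneg (Real.exp_pos _).le, Real.exp_lt_one_iff]
      exact neg_neg_of_pos ht
    refine (χ.hasSum_genFun hz).congr_fun fun n ↦ ?_
    rw [← ofReal_pow, ← Real.exp_nat_mul]
    push_cast
    ring_nf
  · refine ((summable_nat_add_iff 1).mpr (LSeriesSummable_of_one_lt_re χ hs).norm).congr
      fun n ↦ ?_
    rw [LSeries.norm_term_eq, if_neg n.succ_ne_zero]
    push_cast
    rfl

end DirichletCharacter

theorem integral_Ioo_zero_one_eq_integral_Ioi_exp_neg {E : Type*} [NormedAddCommGroup E]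
    [NormedSpace ℝ E] (g : ℝ → E) :
    ∫ z in Ioo 0 1, g z = ∫ t in Ioi 0, rexp (-t) • g (rexp (-t)) := by
  have himage : (fun t ↦ rexp (-t)) '' Ioi 0 = Ioo 0 1 := by
    rw [show (fun t ↦ rexp (-t)) = rexp ∘ Neg.neg from rfl, image_comp, image_neg_Ioi, neg_zero,
      image_exp_Iio, Real.exp_zero]
  rw [← himage, integral_image_eq_integral_abs_deriv_smul measurableSet_Ioi
    (fun t _ ↦ ((hasDerivAt_neg t).exp).hasDerivWithinAt)
    (Real.exp_injective.comp neg_injective).injOn]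
  refine setIntegral_congr_fun measurableSet_Ioi fun t _ ↦ ?_
  simp

theorem integral_Ioo_neg_log_cpow_mul_inv_eq_mellin (F : ℝ → ℂ) (s : ℂ) :
    ∫ z in Ioo 0 1, ((-Real.log z : ℝ) : ℂ) ^ (s - 1) * F z * (z : ℂ)⁻¹ =
      mellin (fun t ↦ F (rexp (-t))) s := by
  rw [integral_Ioo_zero_one_eq_integral_Ioi_exp_neg, mellin]
  refine setIntegral_congr_fun measurableSet_Ioi fun t _ ↦ ?_
  have : (rexp (-t) : ℂ) ≠ 0 := ofReal_ne_zero.2 (Real.exp_pos _).ne'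
  simp only [Real.log_exp, neg_neg, real_smul, smul_eq_mul]
  field_simp

theorem stmt_8_general (f : ℕ) [NeZero f] (χ : DirichletCharacter ℂ f)
    (s : ℂ) (hs : 1 < s.re) :
    DirichletCharacter.LFunction χ s =
      (1 / Complex.Gamma s) *
        ∫ z in Set.Ioo (0:ℝ) 1,
          ((-Real.log z : ℝ) : ℂ) ^ (s - 1) *
            (∑ a ∈ Finset.Icc 1 f, χ (a : ZMod f) * (z : ℂ) ^ a) *
            ((1 - (z : ℂ) ^ f) * z)⁻¹ := by
  have hΓ : Gamma s ≠ 0 := Gamma_ne_zero_of_re_pos (by linarith)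
  calc DirichletCharacter.LFunction χ s
      = (1 / Gamma s) * mellin (fun t ↦ χ.genFun (rexp (-t))) s := by
        rw [χ.mellin_genFun_exp_neg hs, one_div, inv_mul_cancel_left₀ hΓ]
    _ = _ := by
        rw [← integral_Ioo_neg_log_cpow_mul_inv_eq_mellin (fun z ↦ χ.genFun z)]
        congr 1
        refine setIntegral_congr_fun measurableSet_Ioo fun z _ ↦ ?_
        rw [DirichletCharacter.genFun, div_eq_mul_inv, mul_inv]
        ring

theorem stmt_8 (f : ℕ) (hf : 1 ≤ f) [NeZero f] (χ : DirichletCharacter ℂ f)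
    (s : ℂ) (hs : 1 < s.re) :
    DirichletCharacter.LFunction χ s =
      (1 / Complex.Gamma s) *
        ∫ z in Set.Ioo (0:ℝ) 1,
          ((-Real.log z : ℝ) : ℂ) ^ (s - 1) *
            (∑ a ∈ Finset.Icc 1 f, χ (a : ZMod f) * (z : ℂ) ^ a) *
            ((1 - (z : ℂ) ^ f) * z)⁻¹ :=
  stmt_8_general f χ s hs
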